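/- Let f_n, g_n, f, g : [0,∞) → ℝ be continuous functions with f(0) < g(0). Suppose T = inf{t ≥ 0 : f(t) = g(t)} is finite and for every δ > 0 there exists t ∈ [T, T+δ] with f(t) > g(t). Suppose further that sup_{0 ≤ t ≤ T+1} |f_n(t) - f(t)| → 0 and sup_{0 ≤ t ≤ T+1} |g_n(t) - g(t)| → 0 as n → ∞, and let (ε_n) be a sequence of positive reals with ε_n → 0. Define T_n = inf{t ≥ 0 : g_n(t) - f_n(t) ≤ ε_n}. Then T_n → T as n → ∞. -/

import Mathlib

/-!
Put `h = g - f`. Before `T` the function `h` is positive by the intermediate value theorem, so on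
every `[0, c]` with `c < T` it is bounded below by a positive constant, and uniform convergence
together with `εₙ → 0` keeps `gₙ - fₙ - εₙ` positive there: eventually `Tₙ ≥ c`. Arbitrarily
soon after `T` the function `h` is negative, and convergence at such a point gives eventually
`Tₙ ≤ T + δ`.
-/

open Filter Set Topology

theorem tendstoUniformlyOn_of_tendsto_iSup_abs_sub {α ι : Type*} [TopologicalSpace α]
    {l : Filter ι} {s : Set α} {F : ι → α → ℝ} {f : α → ℝ} (hs : IsCompact s)
    (hF : ∀ i, ContinuousOn (F i) s) (hf : ContinuousOn f s)
    (h : Tendsto (fun i => ⨆ x : s, |F i x - f x|) l (𝓝 0)) :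
    TendstoUniformlyOn F f l s := by
  refine Metric.tendstoUniformlyOn_iff.2 fun η hη => ?_
  filter_upwards [h.eventually (gt_mem_nhds hη)] with i hi x hx
  have hbdd : BddAbove (range fun y : s => |F i y - f y|) := by
    simpa only [image_eq_range, Pi.sub_apply] using hs.bddAbove_image ((hF i).sub hf).abs
  rw [Real.dist_eq, abs_sub_comm]
  exact (le_ciSup hbdd ⟨x, hx⟩).trans_lt hi

theorem TendstoUniformlyOn.eventually_forall_pos {α ι : Type*} [TopologicalSpace α]
    {l : Filter ι} {s : Set α} {F : ι → α → ℝ} {f : α → ℝ} (hF : TendstoUniformlyOn F f l s)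
    (hs : IsCompact s) (hf : ContinuousOn f s) (hpos : ∀ x ∈ s, 0 < f x) :
    ∀ᶠ i in l, ∀ x ∈ s, 0 < F i x := by
  obtain ⟨m, hm, hmf⟩ := hs.exists_forall_le' hf hpos
  filter_upwards [Metric.tendstoUniformlyOn_iff.1 hF m hm] with i hi x hx
  have hfx := hmf x hx
  have hFx := (abs_lt.1 ((Real.dist_eq _ _).symm.trans_lt (hi x hx))).2
  linarith

theorem lt_of_lt_sInf_setOf_eq {f g : ℝ → ℝ} {a t : ℝ} (hf : ContinuousOn f (Icc a t))
    (hg : ContinuousOn g (Icc a t)) (ha : f a < g a) (hat : a ≤ t)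
    (ht : t < sInf {s | a ≤ s ∧ f s = g s}) : f t < g t := by
  by_contra! hle
  obtain ⟨s, hs, hfs⟩ : ∃ s ∈ Icc a t, g s - f s = 0 :=
    intermediate_value_Icc' hat (hg.sub hf) ⟨sub_nonpos.2 hle, sub_nonneg.2 ha.le⟩
  have : sInf {s | a ≤ s ∧ f s = g s} ≤ s :=
    csInf_le ⟨a, fun _ h => h.1⟩ ⟨hs.1, by linarith⟩
  linarith [hs.2]

section FirstNonpos

variable {ι : Type*} {l : Filter ι} {h : ℝ → ℝ} {G : ι → ℝ → ℝ} {T : ℝ}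

theorem eventually_exists_nonpos_lt (hT : 0 ≤ T) (hcross : ∀ δ > 0, ∃ t ∈ Icc T (T + δ), h t < 0)
    (hG : TendstoUniformlyOn G h l (Icc 0 (T + 1))) {b : ℝ} (hb : T < b) :
    ∀ᶠ i in l, ∃ t, (0 ≤ t ∧ G i t ≤ 0) ∧ t < b := by
  obtain ⟨t, ht, hlt⟩ := hcross (min ((b - T) / 2) 1) (lt_min (by linarith) one_pos)
  have htb : t < b := by linarith [ht.2, min_le_left ((b - T) / 2) 1]
  have ht1 : t ∈ Icc 0 (T + 1) := ⟨hT.trans ht.1, by linarith [ht.2, min_le_right ((b - T) / 2) 1]⟩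
  filter_upwards [(hG.tendsto_at ht1).eventually (gt_mem_nhds hlt)] with i hi
  exact ⟨t, ⟨hT.trans ht.1, hi.le⟩, htb⟩

theorem tendsto_sInf_setOf_nonpos (hT : 0 ≤ T) (hh : ContinuousOn h (Ico 0 T))
    (hpos : ∀ t ∈ Ico 0 T, 0 < h t) (hcross : ∀ δ > 0, ∃ t ∈ Icc T (T + δ), h t < 0)
    (hG : TendstoUniformlyOn G h l (Icc 0 (T + 1))) :
    Tendsto (fun i => sInf {t | 0 ≤ t ∧ G i t ≤ 0}) l (𝓝 T) := by
  have hbdd (i : ι) : BddBelow {t | 0 ≤ t ∧ G i t ≤ 0} := ⟨0, fun _ ht => ht.1⟩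
  refine tendsto_order.2 ⟨fun a ha => ?_, fun b hb => ?_⟩
  · rcases lt_or_ge a 0 with ha0 | ha0
    · exact Eventually.of_forall fun i => ha0.trans_le (Real.sInf_nonneg fun _ ht => ht.1)
    obtain ⟨c, hac, hcT⟩ := exists_between ha
    have hc_Ico : Icc 0 c ⊆ Ico 0 T := Icc_subset_Ico_right hcT
    have hc_Icc : Icc 0 c ⊆ Icc 0 (T + 1) := Icc_subset_Icc_right (by linarith)
    filter_upwards [eventually_exists_nonpos_lt hT hcross hG (lt_add_one T),
      (hG.mono hc_Icc).eventually_forall_pos isCompact_Icc (hh.mono hc_Ico)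
        fun t ht => hpos t (hc_Ico ht)]
      with i hne hGpos
    obtain ⟨t, ht, -⟩ := hne
    refine hac.trans_le (le_csInf ⟨t, ht⟩ fun s hs => ?_)
    by_contra! hsc
    exact (hGpos s ⟨hs.1, hsc.le⟩).not_ge hs.2
  · filter_upwards [eventually_exists_nonpos_lt hT hcross hG hb] with i ⟨t, ht, htb⟩
    exact (csInf_le (hbdd i) ht).trans_lt htb

end FirstNonpos

theorem stmt3_general (f g : ℝ → ℝ) (fn gn : ℕ → ℝ → ℝ) (ε : ℕ → ℝ)
    (hf : Continuous f) (hg : Continuous g)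
    (hfn : ∀ n, Continuous (fn n)) (hgn : ∀ n, Continuous (gn n))
    (h0 : f 0 < g 0)
    (T : ℝ) (hT : T = sInf {t : ℝ | 0 ≤ t ∧ f t = g t})
    (hcross : ∀ δ > (0 : ℝ), ∃ t ∈ Set.Icc T (T + δ), g t < f t)
    (hfu : Tendsto (fun n => ⨆ t : Set.Icc (0 : ℝ) (T + 1), |fn n t - f t|) atTop (nhds 0))
    (hgu : Tendsto (fun n => ⨆ t : Set.Icc (0 : ℝ) (T + 1), |gn n t - g t|) atTop (nhds 0))
    (hε0 : Tendsto ε atTop (nhds 0))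
    (Tn : ℕ → ℝ) (hTn : ∀ n, Tn n = sInf {t : ℝ | 0 ≤ t ∧ gn n t - fn n t ≤ ε n}) :
    Tendsto Tn atTop (nhds T) := by
  have hT0 : 0 ≤ T := hT ▸ Real.sInf_nonneg fun t ht => ht.1
  have hpos (t : ℝ) (ht : t ∈ Ico 0 T) : 0 < g t - f t :=
    sub_pos.2 <| lt_of_lt_sInf_setOf_eq hf.continuousOn hg.continuousOn h0 ht.1 (hT ▸ ht.2)
  have hcross_sub (δ : ℝ) (hδ : 0 < δ) : ∃ t ∈ Icc T (T + δ), g t - f t < 0 := by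
    obtain ⟨t, ht, hlt⟩ := hcross δ hδ
    exact ⟨t, ht, sub_neg.2 hlt⟩
  have hG : TendstoUniformlyOn (fun n t => gn n t - fn n t - ε n) (fun t => g t - f t - 0) atTop
      (Icc 0 (T + 1)) :=
    ((tendstoUniformlyOn_of_tendsto_iSup_abs_sub isCompact_Icc (fun n => (hgn n).continuousOn)
      hg.continuousOn hgu).fun_sub (tendstoUniformlyOn_of_tendsto_iSup_abs_sub isCompact_Icc
      (fun n => (hfn n).continuousOn) hf.continuousOn hfu)).fun_sub (hε0.tendstoUniformlyOn_const _)
  simp only [sub_zero] at hG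
  convert tendsto_sInf_setOf_nonpos hT0 (hg.sub hf).continuousOn hpos hcross_sub hG using 2 with n
  simp only [hTn, sub_nonpos]

/-- Deterministic lemma on convergence of approximate first-meeting times of
uniformly convergent continuous functions. -/
theorem stmt3 (f g : ℝ → ℝ) (fn gn : ℕ → ℝ → ℝ) (ε : ℕ → ℝ)
    (hf : Continuous f) (hg : Continuous g)
    (hfn : ∀ n, Continuous (fn n)) (hgn : ∀ n, Continuous (gn n))
    (h0 : f 0 < g 0)
    (T : ℝ) (hT : T = sInf {t : ℝ | 0 ≤ t ∧ f t = g t})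
    (hTfin : ∃ t : ℝ, 0 ≤ t ∧ f t = g t)
    (hcross : ∀ δ > (0 : ℝ), ∃ t ∈ Set.Icc T (T + δ), g t < f t)
    (hfu : Tendsto (fun n => ⨆ t : Set.Icc (0 : ℝ) (T + 1), |fn n t - f t|) atTop (nhds 0))
    (hgu : Tendsto (fun n => ⨆ t : Set.Icc (0 : ℝ) (T + 1), |gn n t - g t|) atTop (nhds 0))
    (hε : ∀ n, 0 < ε n) (hε0 : Tendsto ε atTop (nhds 0))
    (Tn : ℕ → ℝ) (hTn : ∀ n, Tn n = sInf {t : ℝ | 0 ≤ t ∧ gn n t - fn n t ≤ ε n}) :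
    Tendsto Tn atTop (nhds T) :=
  stmt3_general f g fn gn ε hf hg hfn hgn h0 T hT hcross hfu hgu hε0 Tn hTn
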